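/- Let M be a placement of type m=(m_1,…,m_n) with N=S_1+⋯+S_n total entries, let S(M)=M′ be the shifted placement, and set ω=B(M), ω′=B(M′). Then: (1) if N does not lie in the last row of M, then ω′=ω; (2) if N lies in the last row of M, then ω′ is obtained from ω by rotating one position to the right, i.e., ω′_a = ω_{a−1} with indices taken cyclically modulo S_n. -/

import Mathlib

namespace CMLQ

/-- Partial sums `S m i = m 1 + ⋯ + m i` (1-indexed). -/
def S (m : ℕ → ℕ) (i : ℕ) : ℕ := ∑ j ∈ Finset.Icc 1 i, m j

/-- Total number of entries `N = S 1 + ⋯ + S n`. -/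
def Ntot (n : ℕ) (m : ℕ → ℕ) : ℕ := ∑ i ∈ Finset.Icc 1 n, S m i

/-- `rows` (1-indexed rows, each given as a finite set of entries, the increasing
order being implicit) is a placement of type `m` with `n` rows:  row `i` has
`S m i` entries, the rows are disjoint, and together the entries are exactly
`1, …, N`. -/
def IsPlacement (n : ℕ) (m : ℕ → ℕ) (rows : ℕ → Finset ℕ) : Prop :=
  (∀ i ∈ Finset.Icc 1 n, (rows i).card = S m i) ∧
  (∀ i, i ∉ Finset.Icc 1 n → rows i = ∅) ∧
  (∀ i j, i ≠ j → Disjoint (rows i) (rows j)) ∧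
  (Finset.Icc 1 n).biUnion rows = Finset.Icc 1 (Ntot n m)

/-- Next entry of a bully path: the smallest available entry of the next row
larger than `x`, or (wrapping) the smallest available entry of the next row. -/
def nextEntry (A : Finset ℕ) (x : ℕ) : ℕ :=
  ((A.filter fun y => x < y).min.untopD (A.min.untopD 0))

/-- Run one bully path starting below `x`, through the list of available sets of
the lower rows; returns the path (one entry per lower row) and the updated
available sets. -/
def runPath (x : ℕ) : List (Finset ℕ) → List ℕ × List (Finset ℕ)
  | [] => ([], [])
  | A :: rest =>
    let y := nextEntry A x
    let (p, rest') := runPath y rest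
    (y :: p, A.erase y :: rest')

/-- Run the bully paths starting at each entry of `starts` in order. -/
def runRow : List ℕ → List (Finset ℕ) → List (List ℕ) × List (Finset ℕ)
  | [], avail => ([], avail)
  | x :: xs, avail =>
    let (p, avail') := runPath x avail
    let (ps, avail'') := runRow xs avail'
    ((x :: p) :: ps, avail'')

/-- Run the whole bully path procedure, row by row; returns the list of all
bully paths (a path starting in row `r` is recorded as its list of entries,
one in each of rows `r, r+1, …, n`; entries of the last row not on any path
are recorded as paths of length 1). -/
def runRows : ℕ → List (Finset ℕ) → List (List ℕ)
  | 0, _ => []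
  | _ + 1, [] => []
  | fuel + 1, A :: rest =>
    let (ps, rest') := runRow (A.sort (· ≤ ·)) rest
    ps ++ runRows fuel rest'

/-- The list of all bully paths of a placement with `n` rows. -/
def pathsOf (n : ℕ) (rows : ℕ → Finset ℕ) : List (List ℕ) :=
  runRows n ((List.range n).map fun i => rows (i + 1))

/-- All steps `(x, y)` of bully paths (`y` is the entry of the next row reached
from `x`). -/
def edgesOf (n : ℕ) (rows : ℕ → Finset ℕ) : List (ℕ × ℕ) :=
  ((pathsOf n rows).map fun p => p.zip p.tail).flatten

/-- `x` bullies `y`: a bully path steps from `x` to the entry `y > x` of the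
next row (a non-wrapping step). -/
def Bullies (n : ℕ) (rows : ℕ → Finset ℕ) (x y : ℕ) : Prop :=
  (x, y) ∈ edgesOf n rows ∧ x < y

/-- A bully path steps from `x` to `y` by wrapping. -/
def WrapBullies (n : ℕ) (rows : ℕ → Finset ℕ) (x y : ℕ) : Prop :=
  (x, y) ∈ edgesOf n rows ∧ y < x

/-- The number of wrapping events from row `i` to row `i+1`. -/
def wrapCount (n : ℕ) (rows : ℕ → Finset ℕ) (i : ℕ) : ℕ :=
  (edgesOf n rows).countP fun e => decide (e.2 < e.1 ∧ e.1 ∈ rows i)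

/-- The `k`-th smallest entry of row `i` (both 1-indexed). -/
def entry (rows : ℕ → Finset ℕ) (i k : ℕ) : ℕ :=
  ((rows i).sort (· ≤ ·)).getD (k - 1) 0

/-- The projected word: `wordOf n rows a` is the label of the `a`-th smallest
entry of the last row (1-indexed); a path of length `n - r + 1` starts in
row `r` and labels its last entry `r`. -/
def wordOf (n : ℕ) (rows : ℕ → Finset ℕ) (a : ℕ) : ℕ :=
  ((pathsOf n rows).findSome? fun p =>
    if p.getLast? = some (entry rows n a) then some (n + 1 - p.length) else none).getD 0

/-- A standard Young tableau of shape `lam` (rows of the shape listed from top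
to bottom), encoded as a function on 0-indexed cells `(i, j)`, vanishing
outside the shape: entries are `1, …, |lam|`, pairwise distinct, strictly
increasing along rows and down columns. -/
def IsSYT (lam : List ℕ) (T : ℕ × ℕ → ℕ) : Prop :=
  (∀ c : ℕ × ℕ, ¬(c.1 < lam.length ∧ c.2 < lam.getD c.1 0) → T c = 0) ∧
  (∀ c : ℕ × ℕ, c.1 < lam.length → c.2 < lam.getD c.1 0 → 1 ≤ T c ∧ T c ≤ lam.sum) ∧
  (∀ c c' : ℕ × ℕ, c.1 < lam.length → c.2 < lam.getD c.1 0 →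
    c'.1 < lam.length → c'.2 < lam.getD c'.1 0 → c ≠ c' → T c ≠ T c') ∧
  (∀ i j j' : ℕ, i < lam.length → j < j' → j' < lam.getD i 0 → T (i, j) < T (i, j')) ∧
  (∀ i i' j : ℕ, i < i' → i' < lam.length → j < lam.getD i 0 → j < lam.getD i' 0 →
    T (i, j) < T (i', j))

/-- `f_lam`: the number of standard Young tableaux of shape `lam`. -/
noncomputable def sytCount (lam : List ℕ) : ℕ := Set.ncard {T : ℕ × ℕ → ℕ | IsSYT lam T}

/-- Binomial coefficient with an integer lower index (`0` if negative). -/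
def chooseInt (a : ℕ) (b : ℤ) : ℕ := if 0 ≤ b then a.choose b.toNat else 0

/-- The type `(m₁, m₂, m₃) = (s, t, u)` of a three-row placement. -/
def m3 (s t u : ℕ) : ℕ → ℕ := fun i => if i = 1 then s else if i = 2 then t else if i = 3 then u else 0

/-- The type `(m₁, m₂) = (s, u)` of a two-row placement. -/
def m2 (s u : ℕ) : ℕ → ℕ := fun i => if i = 1 then s else if i = 2 then u else 0

/-- The shift operator: add `1` modulo `N` to each entry (so `N ↦ 1`); the rows,
being finite sets, are implicitly re-sorted. -/
def shiftRows (N : ℕ) (rows : ℕ → Finset ℕ) : ℕ → Finset ℕ :=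
  fun i => (rows i).image fun x => if x = N then 1 else x + 1

section AuxShift



variable (N : ℕ)

def key (x z : ℕ) : ℕ := if x < z then z else z + N

def IsNext (A : Finset ℕ) (x y : ℕ) : Prop :=
  y ∈ A ∧ ∀ z ∈ A, key N x y ≤ key N x z

lemma nextEntry_mem {A : Finset ℕ} (h : A.Nonempty) (x : ℕ) : nextEntry A x ∈ A := by
  unfold nextEntry
  rcases eq_or_ne (A.filter fun y => x < y) ∅ with hf | hf
  · rw [hf]
    simp only [Finset.min_empty, WithTop.untopD_top]
    rw [← Finset.coe_min' h, WithTop.untopD_coe]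
    exact Finset.min'_mem _ _
  · have hne : (A.filter fun y => x < y).Nonempty := Finset.nonempty_iff_ne_empty.2 hf
    rw [← Finset.coe_min' hne, WithTop.untopD_coe]
    exact Finset.mem_of_mem_filter _ (Finset.min'_mem _ _)

lemma isNext_nextEntry {A : Finset ℕ} (h : A.Nonempty) (hA : A ⊆ Finset.Icc 1 N) (x : ℕ) :
    IsNext N A x (nextEntry A x) := by
  refine ⟨nextEntry_mem h x, ?_⟩
  intro z hz
  unfold nextEntry
  rcases eq_or_ne (A.filter fun y => x < y) ∅ with hf | hf
  · have hnx : ∀ w ∈ A, ¬ x < w := by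
      intro w hw hxw
      exact absurd (Finset.mem_filter.2 ⟨hw, hxw⟩) (by simp [hf])
    rw [hf]
    simp only [Finset.min_empty, WithTop.untopD_top]
    rw [← Finset.coe_min' h, WithTop.untopD_coe]
    have h1 := Finset.min'_le A z hz
    have h2 := hnx _ (Finset.min'_mem A h)
    have h3 := hnx _ hz
    simp only [key, if_neg h2, if_neg h3]
    omega
  · have hne : (A.filter fun y => x < y).Nonempty := Finset.nonempty_iff_ne_empty.2 hf
    rw [← Finset.coe_min' hne, WithTop.untopD_coe]
    have hy := Finset.min'_mem _ hne
    rw [Finset.mem_filter] at hy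
    have hyN : nextEntry A x ≤ N := by
      have := hA (nextEntry_mem h x); simp [Finset.mem_Icc] at this; exact this.2
    have hyN' : (A.filter fun y => x < y).min' hne ≤ N := by
      have := hA hy.1; simp [Finset.mem_Icc] at this; exact this.2
    have hz1 : 1 ≤ z := by have := hA hz; simp [Finset.mem_Icc] at this; exact this.1
    simp only [key, if_pos hy.2]
    by_cases hxz : x < z
    · rw [if_pos hxz]
      exact Finset.min'_le _ z (Finset.mem_filter.2 ⟨hz, hxz⟩)
    · rw [if_neg hxz]; omega

lemma key_inj {x z1 z2 : ℕ} (h1 : z1 ∈ Finset.Icc 1 N) (h2 : z2 ∈ Finset.Icc 1 N)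
    (h : key N x z1 = key N x z2) : z1 = z2 := by
  simp only [Finset.mem_Icc] at h1 h2
  simp only [key] at h
  split_ifs at h <;> omega

lemma isNext_unique {A : Finset ℕ} (hA : A ⊆ Finset.Icc 1 N) {x y y' : ℕ}
    (h : IsNext N A x y) (h' : IsNext N A x y') : y = y' := by
  exact key_inj N (hA h.1) (hA h'.1)
    (le_antisymm (h.2 _ h'.1) (h'.2 _ h.1))

lemma nextEntry_eq_of_isNext {A : Finset ℕ} (h : A.Nonempty) (hA : A ⊆ Finset.Icc 1 N)
    {x y : ℕ} (hy : IsNext N A x y) : nextEntry A x = y :=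
  isNext_unique N hA (isNext_nextEntry N h hA x) hy


/-- the shift map -/
def sh (x : ℕ) : ℕ := if x = N then 1 else x + 1

def Sh (A : Finset ℕ) : Finset ℕ := A.image (sh N)

lemma sh_mem_Icc (hN : 1 ≤ N) {x : ℕ} (hx : x ∈ Finset.Icc 1 N) : sh N x ∈ Finset.Icc 1 N := by
  simp only [Finset.mem_Icc] at *
  simp only [sh]; split_ifs <;> omega

lemma sh_inj {a b : ℕ} (ha : a ∈ Finset.Icc 1 N) (hb : b ∈ Finset.Icc 1 N)
    (h : sh N a = sh N b) : a = b := by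
  simp only [Finset.mem_Icc] at ha hb
  simp only [sh] at h; split_ifs at h <;> omega

lemma key_phi {x z1 z2 : ℕ} (hx : x ∈ Finset.Icc 1 N) (h1 : z1 ∈ Finset.Icc 1 N)
    (h2 : z2 ∈ Finset.Icc 1 N) :
    key N (sh N x) (sh N z1) ≤ key N (sh N x) (sh N z2) ↔ key N x z1 ≤ key N x z2 := by
  simp only [Finset.mem_Icc] at hx h1 h2
  simp only [key, sh]
  split_ifs <;> omega

lemma key_shift_argmin {x u z1 z2 : ℕ} (hu : u ∈ Finset.Icc 1 N) (h1 : z1 ∈ Finset.Icc 1 N)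
    (h2 : z2 ∈ Finset.Icc 1 N) (hx1 : key N x u < key N x z1) (hx2 : key N x u < key N x z2) :
    key N u z1 ≤ key N u z2 ↔ key N x z1 ≤ key N x z2 := by
  simp only [Finset.mem_Icc] at hu h1 h2
  simp only [key] at *
  split_ifs at * <;> omega

lemma mem_Sh {A : Finset ℕ} {y : ℕ} (hy : y ∈ A) : sh N y ∈ Sh N A :=
  Finset.mem_image_of_mem _ hy

lemma Sh_subset (hN : 1 ≤ N) {A : Finset ℕ} (hA : A ⊆ Finset.Icc 1 N) :
    Sh N A ⊆ Finset.Icc 1 N := by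
  intro z hz
  rw [Sh, Finset.mem_image] at hz
  obtain ⟨w, hw, rfl⟩ := hz
  exact sh_mem_Icc N hN (hA hw)

lemma Sh_erase {A : Finset ℕ} (hA : A ⊆ Finset.Icc 1 N) {y : ℕ} (hy : y ∈ Finset.Icc 1 N) :
    Sh N (A.erase y) = (Sh N A).erase (sh N y) := by
  ext z
  simp only [Sh, Finset.mem_image, Finset.mem_erase]
  constructor
  · rintro ⟨w, ⟨hwy, hw⟩, rfl⟩
    exact ⟨fun h => hwy (sh_inj N (hA hw) hy h), w, hw, rfl⟩
  · rintro ⟨hz, w, hw, rfl⟩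
    exact ⟨w, ⟨fun h => hz (by rw [h]), hw⟩, rfl⟩

lemma card_Sh {A : Finset ℕ} (hA : A ⊆ Finset.Icc 1 N) : (Sh N A).card = A.card :=
  Finset.card_image_of_injOn fun a ha b hb => sh_inj N (hA ha) (hA hb)

lemma Sh_nonempty {A : Finset ℕ} (h : A.Nonempty) : (Sh N A).Nonempty :=
  h.image _

lemma nextEntry_equiv (hN : 1 ≤ N) {A : Finset ℕ} (h : A.Nonempty) (hA : A ⊆ Finset.Icc 1 N)
    {x : ℕ} (hx : x ∈ Finset.Icc 1 N) :
    nextEntry (Sh N A) (sh N x) = sh N (nextEntry A x) := by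
  have hNext := isNext_nextEntry N h hA x
  refine nextEntry_eq_of_isNext N (Sh_nonempty N h) (Sh_subset N hN hA) ?_
  constructor
  · exact mem_Sh N hNext.1
  · intro z hz
    rw [Sh, Finset.mem_image] at hz
    obtain ⟨w, hw, rfl⟩ := hz
    exact (key_phi N hx (hA hNext.1) (hA hw)).2 (hNext.2 w hw)




lemma runPath_nil (x : ℕ) : runPath x [] = ([], []) := rfl

lemma runPath_cons (x : ℕ) (A : Finset ℕ) (rest : List (Finset ℕ)) :
    runPath x (A :: rest) = (nextEntry A x :: (runPath (nextEntry A x) rest).1,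
      A.erase (nextEntry A x) :: (runPath (nextEntry A x) rest).2) := by
  simp [runPath]

lemma runRow_nil (as : List (Finset ℕ)) : runRow [] as = ([], as) := rfl

lemma runRow_cons (x : ℕ) (xs : List ℕ) (as : List (Finset ℕ)) :
    runRow (x :: xs) as = ((x :: (runPath x as).1) :: (runRow xs (runPath x as).2).1,
      (runRow xs (runPath x as).2).2) := by
  simp [runRow]

/-- Bottom (last) availability set. -/
def bot : List (Finset ℕ) → Finset ℕ
  | [] => ∅
  | [A] => A
  | _ :: B :: rest => bot (B :: rest)

@[simp] lemma bot_nil : bot [] = ∅ := rfl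
@[simp] lemma bot_singleton (A : Finset ℕ) : bot [A] = A := rfl
lemma bot_cons (A : Finset ℕ) {rest : List (Finset ℕ)} (h : rest ≠ []) :
    bot (A :: rest) = bot rest := by
  cases rest with
  | nil => exact absurd rfl h
  | cons B t => rfl

def GoodK (k : ℕ) (as : List (Finset ℕ)) : Prop :=
  ∀ A ∈ as, A ⊆ Finset.Icc 1 N ∧ k ≤ A.card

lemma GoodK.mono {k k' : ℕ} {as : List (Finset ℕ)} (h : GoodK N k as) (hk : k' ≤ k) :
    GoodK N k' as := fun A hA => ⟨(h A hA).1, le_trans hk (h A hA).2⟩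

lemma GoodK.tail {k : ℕ} {A : Finset ℕ} {as : List (Finset ℕ)} (h : GoodK N k (A :: as)) :
    GoodK N k as := fun B hB => h B (List.mem_cons_of_mem _ hB)

lemma GoodK.head {k : ℕ} {A : Finset ℕ} {as : List (Finset ℕ)} (h : GoodK N k (A :: as)) :
    A ⊆ Finset.Icc 1 N ∧ k ≤ A.card := h A (List.mem_cons_self)

lemma runPath_length1 (x : ℕ) (as : List (Finset ℕ)) :
    (runPath x as).1.length = as.length := by
  induction as generalizing x with
  | nil => rfl
  | cons A rest ih => rw [runPath_cons]; simp [ih]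

lemma runPath_length2 (x : ℕ) (as : List (Finset ℕ)) :
    (runPath x as).2.length = as.length := by
  induction as generalizing x with
  | nil => rfl
  | cons A rest ih => rw [runPath_cons]; simp [ih]

lemma runPath_good {k : ℕ} {as : List (Finset ℕ)} (h : GoodK N (k + 1) as) (x : ℕ) :
    GoodK N k (runPath x as).2 := by
  induction as generalizing x with
  | nil => intro A hA; simp [runPath_nil] at hA
  | cons A rest ih =>
    rw [runPath_cons]
    intro B hB
    rcases List.mem_cons.1 hB with rfl | hB
    · obtain ⟨hsub, hcard⟩ := h.head N
      have hmem : nextEntry A x ∈ A := nextEntry_mem (Finset.card_pos.1 (by omega)) x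
      refine ⟨fun z hz => hsub (Finset.mem_of_mem_erase hz), ?_⟩
      rw [Finset.card_erase_of_mem hmem]; omega
    · exact ih (h.tail N) _ B hB

lemma runPath_getD {as : List (Finset ℕ)} (h : GoodK N 1 as) (x : ℕ) {i : ℕ}
    (hi : i < as.length) :
    (runPath x as).2.getD i ∅ ⊆ as.getD i ∅ ∧
      ((runPath x as).2.getD i ∅).card + 1 = (as.getD i ∅).card := by
  induction as generalizing x i with
  | nil => simp at hi
  | cons A rest ih =>
    rw [runPath_cons]
    cases i with
    | zero =>
      obtain ⟨hsub, hcard⟩ := h.head N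
      have hmem : nextEntry A x ∈ A := nextEntry_mem (Finset.card_pos.1 (by omega)) x
      simp only [List.getD_cons_zero]
      exact ⟨Finset.erase_subset _ _, by rw [Finset.card_erase_of_mem hmem]; omega⟩
    | succ j =>
      simp only [List.getD_cons_succ]
      exact ih (h.tail N) _ (by simpa using hi)

lemma runPath_getLast {as : List (Finset ℕ)} (has : as ≠ []) (h : GoodK N 1 as) (x : ℕ) :
    ∃ l, (runPath x as).1.getLast? = some l ∧ l ∈ bot as ∧
      bot (runPath x as).2 = (bot as).erase l := by
  induction as generalizing x with
  | nil => exact absurd rfl has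
  | cons A rest ih =>
    rw [runPath_cons]
    rcases eq_or_ne rest [] with rfl | hrest
    · refine ⟨nextEntry A x, ?_, ?_, ?_⟩
      · simp [runPath_nil]
      · simpa using nextEntry_mem (Finset.card_pos.1 (by have := (h.head N).2; omega)) x
      · simp [runPath_nil]
    · obtain ⟨l, hl1, hl2, hl3⟩ := ih hrest (h.tail N) (nextEntry A x)
      have hr2 : (runPath (nextEntry A x) rest).2 ≠ [] := by
        intro hc
        have := runPath_length2 (nextEntry A x) rest
        rw [hc] at this
        exact hrest (List.length_eq_zero_iff.1 this.symm)
      refine ⟨l, ?_, ?_, ?_⟩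
      · rw [List.getLast?_cons, hl1]
        · simp
      · rwa [bot_cons _ hrest]
      · rw [bot_cons _ hr2, bot_cons _ hrest, hl3]

lemma runPath_equiv (hN : 1 ≤ N) {as : List (Finset ℕ)} (h : GoodK N 1 as) {x : ℕ}
    (hx : x ∈ Finset.Icc 1 N) :
    runPath (sh N x) (as.map (Sh N)) =
      ((runPath x as).1.map (sh N), (runPath x as).2.map (Sh N)) := by
  induction as generalizing x with
  | nil => rfl
  | cons A rest ih =>
    obtain ⟨hsub, hcard⟩ := h.head N
    have hne : A.Nonempty := Finset.card_pos.1 (by omega)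
    have hy : nextEntry A x ∈ A := nextEntry_mem hne x
    rw [List.map_cons, runPath_cons, runPath_cons, nextEntry_equiv N hN hne hsub hx,
      ih (h.tail N) (hsub hy)]
    simp [Sh_erase N hsub (hsub hy)]


/-- Remaining availability after running two consecutive paths. -/
def after2 (x y : ℕ) (as : List (Finset ℕ)) : List (Finset ℕ) :=
  (runPath y (runPath x as).2).2

lemma after2_cons (x y : ℕ) (A : Finset ℕ) (rest : List (Finset ℕ)) :
    after2 x y (A :: rest) = (A.erase (nextEntry A x)).erase
        (nextEntry (A.erase (nextEntry A x)) y) ::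
      after2 (nextEntry A x) (nextEntry (A.erase (nextEntry A x)) y) rest := by
  simp [after2, runPath_cons]

lemma key_lt_of_ne {A : Finset ℕ} (hA : A ⊆ Finset.Icc 1 N) {x u z : ℕ}
    (hu : IsNext N A x u) (hz : z ∈ A) (hne : z ≠ u) : key N x u < key N x z := by
  rcases lt_or_eq_of_le (hu.2 z hz) with h | h
  · exact h
  · exact absurd (key_inj N (hA hu.1) (hA hz) h) (Ne.symm hne)

lemma swap_after2 {as : List (Finset ℕ)} (h : GoodK N 2 as) (x y : ℕ) :
    after2 x y as = after2 y x as := by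
  induction as generalizing x y with
  | nil => rfl
  | cons A rest ih =>
    obtain ⟨hsub, hcard⟩ := h.head N
    have hne : A.Nonempty := Finset.card_pos.1 (by omega)
    have hu : nextEntry A x ∈ A := nextEntry_mem hne x
    have hu' : nextEntry A y ∈ A := nextEntry_mem hne y
    have hNx : IsNext N A x (nextEntry A x) := isNext_nextEntry N hne hsub x
    have hNy : IsNext N A y (nextEntry A y) := isNext_nextEntry N hne hsub y
    rw [after2_cons, after2_cons]
    rcases eq_or_ne (nextEntry A y) (nextEntry A x) with huu | huu
    · rw [huu] at hNy hu'
      have hesub : A.erase (nextEntry A x) ⊆ Finset.Icc 1 N :=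
        fun z hz => hsub (Finset.mem_of_mem_erase hz)
      have hene : (A.erase (nextEntry A x)).Nonempty := by
        rw [← Finset.card_pos, Finset.card_erase_of_mem hu]; omega
      have hNw := isNext_nextEntry N hene hesub (nextEntry A x)
      have hw := nextEntry_mem hene (nextEntry A x)
      have key_lt_y : ∀ z ∈ A.erase (nextEntry A x), key N y (nextEntry A x) < key N y z :=
        fun z hz => key_lt_of_ne N hsub hNy (Finset.mem_of_mem_erase hz)
          (Finset.ne_of_mem_erase hz)
      have key_lt_x : ∀ z ∈ A.erase (nextEntry A x), key N x (nextEntry A x) < key N x z :=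
        fun z hz => key_lt_of_ne N hsub hNx (Finset.mem_of_mem_erase hz)
          (Finset.ne_of_mem_erase hz)
      have hvy : nextEntry (A.erase (nextEntry A x)) y
          = nextEntry (A.erase (nextEntry A x)) (nextEntry A x) :=
        nextEntry_eq_of_isNext N hene hesub ⟨hw, fun z hz =>
          (key_shift_argmin N (hsub hu) (hesub hw) (hesub hz)
            (key_lt_y _ hw) (key_lt_y z hz)).1 (hNw.2 z hz)⟩
      have hvx : nextEntry (A.erase (nextEntry A x)) x
          = nextEntry (A.erase (nextEntry A x)) (nextEntry A x) :=
        nextEntry_eq_of_isNext N hene hesub ⟨hw, fun z hz =>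
          (key_shift_argmin N (hsub hu) (hesub hw) (hesub hz)
            (key_lt_x _ hw) (key_lt_x z hz)).1 (hNw.2 z hz)⟩
      rw [huu, hvy, hvx]
    · have hesub : A.erase (nextEntry A x) ⊆ Finset.Icc 1 N :=
        fun z hz => hsub (Finset.mem_of_mem_erase hz)
      have hene : (A.erase (nextEntry A x)).Nonempty := by
        rw [← Finset.card_pos, Finset.card_erase_of_mem hu]; omega
      have he'sub : A.erase (nextEntry A y) ⊆ Finset.Icc 1 N :=
        fun z hz => hsub (Finset.mem_of_mem_erase hz)
      have he'ne : (A.erase (nextEntry A y)).Nonempty := by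
        rw [← Finset.card_pos, Finset.card_erase_of_mem hu']; omega
      have hvy : nextEntry (A.erase (nextEntry A x)) y = nextEntry A y :=
        nextEntry_eq_of_isNext N hene hesub
          ⟨Finset.mem_erase.2 ⟨huu, hu'⟩, fun z hz => hNy.2 z (Finset.mem_of_mem_erase hz)⟩
      have hvx : nextEntry (A.erase (nextEntry A y)) x = nextEntry A x :=
        nextEntry_eq_of_isNext N he'ne he'sub
          ⟨Finset.mem_erase.2 ⟨Ne.symm huu, hu⟩, fun z hz => hNx.2 z (Finset.mem_of_mem_erase hz)⟩
      rw [hvy, hvx, ih (h.tail N) (nextEntry A x) (nextEntry A y), Finset.erase_right_comm]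

lemma runRow_snd_cons (x : ℕ) (xs : List ℕ) (as : List (Finset ℕ)) :
    (runRow (x :: xs) as).2 = (runRow xs (runPath x as).2).2 := by
  rw [runRow_cons]

lemma runRow_length (xs : List ℕ) (as : List (Finset ℕ)) :
    (runRow xs as).2.length = as.length := by
  induction xs generalizing as with
  | nil => rfl
  | cons x xs ih => rw [runRow_snd_cons, ih, runPath_length2]

lemma runRow_good {xs : List ℕ} {k : ℕ} {as : List (Finset ℕ)}
    (h : GoodK N (xs.length + k) as) : GoodK N k (runRow xs as).2 := by
  induction xs generalizing as with
  | nil => simpa [runRow_nil] using h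
  | cons x xs ih =>
    rw [runRow_snd_cons]
    have h' : GoodK N (xs.length + k + 1) as := by simpa [Nat.add_right_comm] using h
    exact ih (runPath_good N h' x)

lemma runRow_rotate {xs : List ℕ} {as : List (Finset ℕ)} (h : GoodK N (xs.length + 1) as)
    (y : ℕ) : (runRow (xs ++ [y]) as).2 = (runRow (y :: xs) as).2 := by
  induction xs generalizing as y with
  | nil => rfl
  | cons x xs ih =>
    rw [List.cons_append, runRow_snd_cons,
      ih (runPath_good N h x) y,
      runRow_snd_cons, runRow_snd_cons, runRow_snd_cons]
    show (runRow xs (after2 x y as)).2 = (runRow xs (after2 y x as)).2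
    rw [swap_after2 N (h.mono N (Nat.le_add_left 2 xs.length)) x y]


lemma getLast?_cons_ne {α : Type*} (x : α) {l : List α} (h : l ≠ []) :
    (x :: l).getLast? = l.getLast? := by
  cases l with
  | nil => exact absurd rfl h
  | cons a t => simp

lemma runRow_getD {xs : List ℕ} {as : List (Finset ℕ)} (h : GoodK N xs.length as) {i : ℕ}
    (hi : i < as.length) :
    (runRow xs as).2.getD i ∅ ⊆ as.getD i ∅ ∧
      ((runRow xs as).2.getD i ∅).card + xs.length = (as.getD i ∅).card := by
  induction xs generalizing as with
  | nil => rw [runRow_nil]; exact ⟨subset_rfl, by simp⟩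
  | cons x xs ih =>
    rw [runRow_snd_cons]
    have h1 : GoodK N 1 as := h.mono N (Nat.succ_le_succ (Nat.zero_le _))
    obtain ⟨hsub, hcard⟩ := runPath_getD N h1 x hi
    have hi' : i < (runPath x as).2.length := by rwa [runPath_length2]
    obtain ⟨hsub2, hcard2⟩ := ih (runPath_good N h x) hi'
    exact ⟨hsub2.trans hsub, by simp only [List.length_cons]; omega⟩

lemma runRow_path_length {xs : List ℕ} {as : List (Finset ℕ)} :
    ∀ p ∈ (runRow xs as).1, p.length = as.length + 1 := by
  induction xs generalizing as with
  | nil => intro p hp; simp [runRow_nil] at hp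
  | cons x xs ih =>
    intro p hp
    rw [runRow_cons] at hp
    rcases List.mem_cons.1 hp with rfl | hp
    · simp [runPath_length1]
    · rw [← runPath_length2 x as]
      exact ih p hp

lemma runRow_ne_nil {xs : List ℕ} {as : List (Finset ℕ)} (has : as ≠ []) :
    (runRow xs as).2 ≠ [] := by
  intro hc
  have := runRow_length xs as
  rw [hc] at this
  exact has (List.length_eq_zero_iff.1 this.symm)

lemma runPath_ne_nil {x : ℕ} {as : List (Finset ℕ)} (has : as ≠ []) :
    (runPath x as).2 ≠ [] := by
  intro hc
  have := runPath_length2 x as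
  rw [hc] at this
  exact has (List.length_eq_zero_iff.1 this.symm)

lemma runRow_bot_subset {xs : List ℕ} {as : List (Finset ℕ)} (has : as ≠ [])
    (h : GoodK N xs.length as) : bot (runRow xs as).2 ⊆ bot as := by
  induction xs generalizing as with
  | nil => exact subset_rfl
  | cons x xs ih =>
    rw [runRow_snd_cons]
    have h1 : GoodK N 1 as := h.mono N (Nat.succ_le_succ (Nat.zero_le _))
    obtain ⟨l, _, _, hb⟩ := runPath_getLast N has h1 x
    refine (ih (runPath_ne_nil has) (runPath_good N h x)).trans ?_
    rw [hb]
    exact Finset.erase_subset _ _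

lemma runRow_last_iff {xs : List ℕ} {as : List (Finset ℕ)} (has : as ≠ [])
    (h : GoodK N xs.length as) (e : ℕ) :
    (∃ p ∈ (runRow xs as).1, p.getLast? = some e) ↔
      e ∈ bot as ∧ e ∉ bot (runRow xs as).2 := by
  induction xs generalizing as with
  | nil =>
    rw [runRow_nil]
    simp
  | cons x xs ih =>
    have h1 : GoodK N 1 as := h.mono N (Nat.succ_le_succ (Nat.zero_le _))
    obtain ⟨l, hl1, hl2, hl3⟩ := runPath_getLast N has h1 x
    have hp1 : (runPath x as).1 ≠ [] := by
      intro hc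
      have := runPath_length1 x as
      rw [hc] at this
      exact has (List.length_eq_zero_iff.1 this.symm)
    have ihx := ih (runPath_ne_nil has) (runPath_good N h x)
    have hfin : bot (runRow xs (runPath x as).2).2 ⊆ bot (runPath x as).2 :=
      runRow_bot_subset N (runPath_ne_nil has) (runPath_good N h x)
    rw [runRow_cons]
    constructor
    · rintro ⟨p, hp, hpe⟩
      rcases List.mem_cons.1 hp with rfl | hp
      · rw [getLast?_cons_ne x hp1, hl1] at hpe
        obtain rfl : l = e := by injection hpe
        refine ⟨hl2, fun hc => ?_⟩
        have := hfin hc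
        rw [hl3] at this
        exact (Finset.mem_erase.1 this).1 rfl
      · obtain ⟨hmem, hnot⟩ := ihx.1 ⟨p, hp, hpe⟩
        rw [hl3, Finset.mem_erase] at hmem
        exact ⟨hmem.2, hnot⟩
    · rintro ⟨hmem, hnot⟩
      by_cases hel : e = l
      · subst hel
        exact ⟨x :: (runPath x as).1, List.mem_cons_self,
          by rw [getLast?_cons_ne x hp1, hl1]⟩
      · obtain ⟨p, hp, hpe⟩ := ihx.2 ⟨by rw [hl3, Finset.mem_erase]; exact ⟨hel, hmem⟩, hnot⟩
        exact ⟨p, List.mem_cons_of_mem _ hp, hpe⟩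

lemma runRow_equiv (hN : 1 ≤ N) {xs : List ℕ} {as : List (Finset ℕ)}
    (h : GoodK N xs.length as) (hxs : ∀ x ∈ xs, x ∈ Finset.Icc 1 N) :
    runRow (xs.map (sh N)) (as.map (Sh N)) =
      ((runRow xs as).1.map (List.map (sh N)), (runRow xs as).2.map (Sh N)) := by
  induction xs generalizing as with
  | nil => rfl
  | cons x xs ih =>
    have h1 : GoodK N 1 as := h.mono N (Nat.succ_le_succ (Nat.zero_le _))
    have hx : x ∈ Finset.Icc 1 N := hxs x (List.mem_cons_self)
    rw [List.map_cons, runRow_cons, runRow_cons, runPath_equiv N hN h1 hx]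
    have := ih (runPath_good N h x) (fun z hz => hxs z (List.mem_cons_of_mem _ hz))
    simp only at this ⊢
    rw [this]
    simp


lemma sort_Sh_not_mem {A : Finset ℕ} (hA : A ⊆ Finset.Icc 1 N) (hNA : N ∉ A) :
    (Sh N A).sort (· ≤ ·) = (A.sort (· ≤ ·)).map (sh N) := by
  have hmap : (A.sort (· ≤ ·)).map (sh N) = (A.sort (· ≤ ·)).map (· + 1) :=
    List.map_congr_left fun z hz => by
      have : z ≠ N := fun h => hNA (by rw [← h]; exact (Finset.mem_sort _).1 hz)
      simp [sh, this]
  symm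
  apply (fun hp h1 h2 => List.Perm.eq_of_pairwise' (r := (· ≤ ·)) h1 h2 hp) ?_ ?_ (Finset.pairwise_sort _ _)
  · apply Multiset.coe_eq_coe.1
    have h1 : (↑((A.sort (· ≤ ·)).map (sh N)) : Multiset ℕ) = A.val.map (sh N) := by
      rw [← Multiset.map_coe, Finset.sort_eq]
    rw [h1, Finset.sort_eq]
    have hnd : (A.val.map (sh N)).Nodup :=
      Multiset.Nodup.map_on (fun a ha b hb => sh_inj N (hA ha) (hA hb)) A.nodup
    rw [Sh, Finset.image]
    exact (Multiset.dedup_eq_self.2 hnd).symm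
  · rw [hmap]
    exact List.Pairwise.map _ (fun a b h => by omega) (Finset.pairwise_sort _ _)

lemma sort_erase_max {A : Finset ℕ} (hA : A ⊆ Finset.Icc 1 N) (hNA : N ∈ A) :
    A.sort (· ≤ ·) = (A.erase N).sort (· ≤ ·) ++ [N] := by
  refine (fun hp h1 h2 => List.Perm.eq_of_pairwise' (r := (· ≤ ·)) h1 h2 hp) ?_ (Finset.pairwise_sort _ _) ?_
  · apply Multiset.coe_eq_coe.1
    rw [Finset.sort_eq]
    have : (↑(((A.erase N).sort (· ≤ ·)) ++ [N]) : Multiset ℕ)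
        = ↑((A.erase N).sort (· ≤ ·)) + (N ::ₘ 0) := by
      rw [← Multiset.coe_add]; rfl
    rw [this, Finset.sort_eq]
    have hval : (A.erase N).val = A.val.erase N := rfl
    rw [hval, add_comm]
    simpa [Multiset.singleton_add] using (Multiset.cons_erase (Finset.mem_def.1 hNA)).symm
  · refine List.pairwise_append.2 ⟨Finset.pairwise_sort _ _, List.pairwise_singleton _ _, ?_⟩
    intro a ha b hb
    obtain rfl : b = N := by simpa using hb
    have := hA (Finset.mem_of_mem_erase ((Finset.mem_sort (· ≤ ·)).1 ha))
    simp only [Finset.mem_Icc] at this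
    exact this.2

lemma Sh_of_mem {A : Finset ℕ} (hNA : N ∈ A) :
    Sh N A = insert 1 (Sh N (A.erase N)) := by
  conv_lhs => rw [← Finset.insert_erase hNA]
  rw [Sh, Finset.image_insert]
  simp [sh, Sh]

lemma sort_Sh_mem (hN : 1 ≤ N) {A : Finset ℕ} (hA : A ⊆ Finset.Icc 1 N) (hNA : N ∈ A) :
    (Sh N A).sort (· ≤ ·) = 1 :: ((A.erase N).sort (· ≤ ·)).map (sh N) := by
  have hesub : A.erase N ⊆ Finset.Icc 1 N := fun z hz => hA (Finset.mem_of_mem_erase hz)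
  rw [Sh_of_mem N hNA, Finset.sort_insert, sort_Sh_not_mem N hesub (Finset.notMem_erase _ _)]
  · intro b hb
    rw [Sh, Finset.mem_image] at hb
    obtain ⟨w, hw, rfl⟩ := hb
    have hwN : w ≠ N := Finset.ne_of_mem_erase hw
    simp [sh, hwN]
  · intro hb
    rw [Sh, Finset.mem_image] at hb
    obtain ⟨w, hw, hww⟩ := hb
    have hwN : w ≠ N := Finset.ne_of_mem_erase hw
    have := hesub hw
    simp only [Finset.mem_Icc] at this
    simp [sh, hwN] at hww
    omega

lemma map_sh_sort_mem {A : Finset ℕ} (hA : A ⊆ Finset.Icc 1 N) (hNA : N ∈ A) :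
    (A.sort (· ≤ ·)).map (sh N) = ((A.erase N).sort (· ≤ ·)).map (sh N) ++ [1] := by
  rw [sort_erase_max N hA hNA, List.map_append]
  simp [sh]



lemma runRows_cons (fuel : ℕ) (A : Finset ℕ) (rest : List (Finset ℕ)) :
    runRows (fuel + 1) (A :: rest) = (runRow (A.sort (· ≤ ·)) rest).1 ++
      runRows fuel (runRow (A.sort (· ≤ ·)) rest).2 := by
  simp [runRows]

/-- One round of the procedure: availability sets after processing the top row. -/
def afterRound : List (Finset ℕ) → List (Finset ℕ)
  | [] => []
  | A :: rest => (runRow (A.sort (· ≤ ·)) rest).2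

/-- The round (counted from the current state) in which an entry of the bottom row
is consumed by a bully path. -/
def labAux : ℕ → List (Finset ℕ) → ℕ → ℕ
  | 0, _, _ => 0
  | fuel + 1, LS, e =>
    if e ∈ bot (afterRound LS) then labAux fuel (afterRound LS) e + 1 else 1

def GoodL (LS : List (Finset ℕ)) : Prop :=
  (∀ A ∈ LS, A ⊆ Finset.Icc 1 N) ∧
  ∀ i j : ℕ, i ≤ j → j < LS.length → (LS.getD i ∅).card ≤ (LS.getD j ∅).card

lemma GoodL.toGoodK {A : Finset ℕ} {rest : List (Finset ℕ)} (h : GoodL N (A :: rest)) :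
    GoodK N A.card rest := by
  intro B hB
  obtain ⟨j, hj, rfl⟩ := List.mem_iff_getElem.1 hB
  refine ⟨h.1 _ (List.mem_cons_of_mem _ hB), ?_⟩
  have := h.2 0 (j + 1) (Nat.zero_le _) (by simpa using Nat.succ_lt_succ hj)
  simpa [List.getD_cons_succ, List.getD_eq_getElem?_getD, List.getElem?_eq_getElem hj] using this

lemma sort_length (A : Finset ℕ) : (A.sort (· ≤ ·)).length = A.card :=
  Finset.length_sort _

lemma afterRound_goodL {LS : List (Finset ℕ)} (h : GoodL N LS) : GoodL N (afterRound LS) := by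
  cases LS with
  | nil => exact ⟨by simp [afterRound], by simp [afterRound]⟩
  | cons A rest =>
    have hK : GoodK N (A.sort (· ≤ ·)).length rest := by
      rw [sort_length]; exact h.toGoodK N
    constructor
    · intro B hB
      obtain ⟨j, hj, rfl⟩ := List.mem_iff_getElem.1 hB
      have hj' : j < rest.length := by
        have := runRow_length (A.sort (· ≤ ·)) rest
        simp only [afterRound] at hj
        omega
      exact (runRow_good N (k := 0) hK _ hB).1
    · intro i j hij hj
      simp only [afterRound] at hj ⊢
      rw [runRow_length] at hj
      have hi : i < rest.length := lt_of_le_of_lt hij hj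
      have h1 := (runRow_getD N hK hi).2
      have h2 := (runRow_getD N hK hj).2
      have h3 := h.2 (i + 1) (j + 1) (Nat.succ_le_succ hij) (by simpa using Nat.succ_lt_succ hj)
      simp only [List.getD_cons_succ] at h3
      omega

lemma bot_map_Sh (LS : List (Finset ℕ)) : bot (LS.map (Sh N)) = Sh N (bot LS) := by
  induction LS with
  | nil => simp [Sh]
  | cons A rest ih =>
    cases rest with
    | nil => rfl
    | cons B t => simpa [bot_cons] using ih

lemma bot_mem_or (LS : List (Finset ℕ)) : bot LS = ∅ ∨ bot LS ∈ LS := by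
  induction LS with
  | nil => exact Or.inl rfl
  | cons A rest ih =>
    cases rest with
    | nil => exact Or.inr (by simp)
    | cons B t =>
      rcases ih with h | h
      · exact Or.inl (by rwa [bot_cons _ (by simp)])
      · exact Or.inr (by rw [bot_cons _ (by simp)]; exact List.mem_cons_of_mem _ h)

lemma bot_subset_Icc {LS : List (Finset ℕ)} (h : GoodL N LS) : bot LS ⊆ Finset.Icc 1 N := by
  rcases bot_mem_or LS with hb | hb
  · rw [hb]; exact Finset.empty_subset _
  · exact h.1 _ hb


lemma findSome?_word_some {l : List (List ℕ)} {e v C : ℕ}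
    (hex : ∃ p ∈ l, p.getLast? = some e)
    (hall : ∀ p ∈ l, p.getLast? = some e → C + 1 - p.length = v) :
    (l.findSome? fun p => if p.getLast? = some e then some (C + 1 - p.length) else none)
      = some v := by
  induction l with
  | nil => simp at hex
  | cons p l ih =>
    rw [List.findSome?_cons]
    by_cases hp : p.getLast? = some e
    · rw [if_pos hp]
      rw [hall p (List.mem_cons_self) hp]
    · rw [if_neg hp]
      refine ih ?_ fun q hq hqe => hall q (List.mem_cons_of_mem _ hq) hqe
      obtain ⟨q, hq, hqe⟩ := hex
      rcases List.mem_cons.1 hq with rfl | hq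
      · exact absurd hqe hp
      · exact ⟨q, hq, hqe⟩

lemma findSome?_word_none {l : List (List ℕ)} {e C : ℕ}
    (h : ∀ p ∈ l, p.getLast? ≠ some e) :
    (l.findSome? fun p => if p.getLast? = some e then some (C + 1 - p.length) else none)
      = none := by
  rw [List.findSome?_eq_none_iff]
  intro p hp
  rw [if_neg (h p hp)]

lemma runRow_nil_avail (xs : List ℕ) : runRow xs [] = (xs.map fun x => [x], []) := by
  induction xs with
  | nil => rfl
  | cons x xs ih => rw [runRow_cons, runPath_nil]; simp [ih]

lemma word_lab : ∀ (fuel C : ℕ) (LS : List (Finset ℕ)), LS ≠ [] → fuel = LS.length →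
    LS.length ≤ C → GoodL N LS → ∀ e ∈ bot LS,
    ((runRows fuel LS).findSome? fun p =>
      if p.getLast? = some e then some (C + 1 - p.length) else none).getD 0
      = C - LS.length + labAux fuel LS e := by
  intro fuel
  induction fuel with
  | zero =>
    intro C LS hne hlen
    cases LS with
    | nil => exact absurd rfl hne
    | cons A rest => simp at hlen
  | succ fuel ih =>
    intro C LS hne hlen hC h e he
    cases LS with
    | nil => exact absurd rfl hne
    | cons A rest =>
      rw [runRows_cons]
      have hK : GoodK N (A.sort (· ≤ ·)).length rest := by
        rw [sort_length]; exact h.toGoodK N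
      cases rest with
      | nil =>
        have hfuel : fuel = 0 := by simpa using hlen
        subst hfuel
        rw [runRow_nil_avail]
        simp only [runRows, List.append_nil]
        have hC1 : 1 ≤ C := by simp at hC; omega
        have he' : e ∈ A := by simpa using he
        have hfs : ((A.sort (· ≤ ·)).map fun x => [x]).findSome?
            (fun p => if p.getLast? = some e then some (C + 1 - p.length) else none)
            = some C := by
          refine findSome?_word_some ⟨[e], List.mem_map_of_mem ((Finset.mem_sort _).2 he'), rfl⟩
            fun p hp hpe => ?_
          obtain ⟨x, hx, rfl⟩ := List.mem_map.1 hp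
          simp only [List.length_cons, List.length_nil]
          omega
        rw [hfs]
        have : labAux 1 [A] e = 1 := by
          simp only [labAux, afterRound, runRow_nil_avail]
          simp
        rw [this]
        simp
        omega
      | cons B t =>
        have hrne : (B :: t) ≠ [] := by simp
        have hbot : bot (A :: B :: t) = bot (B :: t) := bot_cons _ hrne
        rw [hbot] at he
        have hiff := runRow_last_iff N (xs := A.sort (· ≤ ·)) hrne hK e
        have hfin_ne : (runRow (A.sort (· ≤ ·)) (B :: t)).2 ≠ [] :=
          runRow_ne_nil hrne
        have hlen2 : (runRow (A.sort (· ≤ ·)) (B :: t)).2.length = (B :: t).length :=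
          runRow_length _ _
        have hARgood : GoodL N (runRow (A.sort (· ≤ ·)) (B :: t)).2 :=
          afterRound_goodL N h
        by_cases hx : e ∈ bot (runRow (A.sort (· ≤ ·)) (B :: t)).2
        · have hnone : ∀ p ∈ (runRow (A.sort (· ≤ ·)) (B :: t)).1, p.getLast? ≠ some e :=
            fun p hp hpe => (hiff.1 ⟨p, hp, hpe⟩).2 hx
          rw [List.findSome?_append, findSome?_word_none hnone, Option.none_or]
          have hlen' : fuel = (runRow (A.sort (· ≤ ·)) (B :: t)).2.length := by
            rw [hlen2]; simpa using hlen
          have hC' : (runRow (A.sort (· ≤ ·)) (B :: t)).2.length ≤ C := by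
            rw [hlen2]; simp at hC ⊢; omega
          rw [ih C _ hfin_ne hlen' hC' hARgood e hx]
          have hlab : labAux (fuel + 1) (A :: B :: t) e
              = labAux fuel (runRow (A.sort (· ≤ ·)) (B :: t)).2 e + 1 := by
            simp only [labAux, afterRound]; exact if_pos hx
          rw [hlab, hlen2]
          simp only [List.length_cons] at hC ⊢
          omega
        · have hex : ∃ p ∈ (runRow (A.sort (· ≤ ·)) (B :: t)).1, p.getLast? = some e :=
            hiff.2 ⟨he, hx⟩
          have hall : ∀ p ∈ (runRow (A.sort (· ≤ ·)) (B :: t)).1, p.getLast? = some e →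
              C + 1 - p.length = C + 1 - (A :: B :: t).length := by
            intro p hp _
            rw [runRow_path_length p hp]
            simp
          rw [List.findSome?_append, findSome?_word_some hex hall]
          have hlab : labAux (fuel + 1) (A :: B :: t) e = 1 := by
            simp only [labAux, afterRound]; exact if_neg hx
          rw [hlab]
          simp only [Option.or_some, Option.some_or, Option.getD_some, List.length_cons] at *
          omega

lemma afterRound_equiv (hN : 1 ≤ N) {LS : List (Finset ℕ)} (h : GoodL N LS) :
    afterRound (LS.map (Sh N)) = (afterRound LS).map (Sh N) := by
  cases LS with
  | nil => rfl
  | cons A rest =>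
    have hsubA : A ⊆ Finset.Icc 1 N := h.1 A (List.mem_cons_self)
    have hK : GoodK N (A.sort (· ≤ ·)).length rest := by
      rw [sort_length]; exact h.toGoodK N
    have hxs : ∀ x ∈ A.sort (· ≤ ·), x ∈ Finset.Icc 1 N :=
      fun x hx => hsubA ((Finset.mem_sort _).1 hx)
    show (runRow ((Sh N A).sort (· ≤ ·)) (rest.map (Sh N))).2
      = ((runRow (A.sort (· ≤ ·)) rest).2).map (Sh N)
    by_cases hNA : N ∈ A
    · have hlen1 : (((A.erase N).sort (· ≤ ·)).map (sh N)).length + 1 = A.card := by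
        rw [List.length_map, sort_length, Finset.card_erase_of_mem hNA]
        have : 1 ≤ A.card := Finset.card_pos.2 ⟨N, hNA⟩
        omega
      have hgood : GoodK N ((((A.erase N).sort (· ≤ ·)).map (sh N)).length + 1)
          (rest.map (Sh N)) := by
        intro B hB
        obtain ⟨B', hB', rfl⟩ := List.mem_map.1 hB
        obtain ⟨hsub', hcard'⟩ := h.toGoodK N B' hB'
        refine ⟨Sh_subset N hN hsub', ?_⟩
        rw [hlen1, card_Sh N hsub']
        exact hcard'
      rw [sort_Sh_mem N hN hsubA hNA, ← runRow_rotate N hgood 1, ← map_sh_sort_mem N hsubA hNA,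
        runRow_equiv N hN hK hxs]
    · rw [sort_Sh_not_mem N hsubA hNA, runRow_equiv N hN hK hxs]

lemma lab_equiv (hN : 1 ≤ N) : ∀ (fuel : ℕ) {LS : List (Finset ℕ)}, GoodL N LS →
    ∀ e ∈ Finset.Icc 1 N, labAux fuel (LS.map (Sh N)) (sh N e) = labAux fuel LS e := by
  intro fuel
  induction fuel with
  | zero => intro LS _ e _; rfl
  | succ fuel ih =>
    intro LS h e he
    have hAR := afterRound_goodL N h
    have hmem : sh N e ∈ Sh N (bot (afterRound LS)) ↔ e ∈ bot (afterRound LS) := by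
      constructor
      · intro hc
        obtain ⟨w, hw, hwe⟩ := Finset.mem_image.1 hc
        rwa [← sh_inj N (bot_subset_Icc N hAR hw) he hwe]
      · exact fun hc => mem_Sh N hc
    simp only [labAux, afterRound_equiv N hN h, bot_map_Sh]
    by_cases hx : e ∈ bot (afterRound LS)
    · rw [if_pos (hmem.2 hx), if_pos hx, ih hAR e he]
    · rw [if_neg (fun hc => hx (hmem.1 hc)), if_neg hx]

lemma bot_append_singleton (l : List (Finset ℕ)) (A : Finset ℕ) : bot (l ++ [A]) = A := by
  induction l with
  | nil => rfl
  | cons B t ih => rw [List.cons_append, bot_cons _ (by simp), ih]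

lemma getD_map_Sh {LS : List (Finset ℕ)} {k : ℕ} (hk : k < LS.length) :
    (LS.map (Sh N)).getD k ∅ = Sh N (LS.getD k ∅) := by
  rw [List.getD_eq_getElem?_getD, List.getD_eq_getElem?_getD, List.getElem?_eq_getElem hk,
    List.getElem?_eq_getElem (by simpa using hk), List.getElem_map]
  rfl

lemma GoodL_map_Sh (hN : 1 ≤ N) {LS : List (Finset ℕ)} (h : GoodL N LS) :
    GoodL N (LS.map (Sh N)) := by
  constructor
  · intro A hA
    obtain ⟨B, hB, rfl⟩ := List.mem_map.1 hA
    exact Sh_subset N hN (h.1 B hB)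
  · intro i j hij hj
    rw [List.length_map] at hj
    have hi := lt_of_le_of_lt hij hj
    have hmemi : LS.getD i ∅ ∈ LS := by
      rw [List.getD_eq_getElem?_getD, List.getElem?_eq_getElem hi]
      exact List.getElem_mem hi
    have hmemj : LS.getD j ∅ ∈ LS := by
      rw [List.getD_eq_getElem?_getD, List.getElem?_eq_getElem hj]
      exact List.getElem_mem hj
    rw [getD_map_Sh N hi, getD_map_Sh N hj, card_Sh N (h.1 _ hmemi), card_Sh N (h.1 _ hmemj)]
    exact h.2 i j hij hj

lemma getD_map_sh {l : List ℕ} {i : ℕ} (hi : i < l.length) :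
    (l.map (sh N)).getD i 0 = sh N (l.getD i 0) := by
  rw [List.getD_eq_getElem?_getD, List.getD_eq_getElem?_getD, List.getElem?_eq_getElem hi,
    List.getElem?_eq_getElem (by simpa using hi), List.getElem_map]
  rfl

end AuxShift

theorem shift_word (n : ℕ) (m : ℕ → ℕ) (rows : ℕ → Finset ℕ) (hn : 1 ≤ n)
    (hpl : IsPlacement n m rows) :
    (Ntot n m ∉ rows n → ∀ a ∈ Finset.Icc 1 (S m n),
      wordOf n (shiftRows (Ntot n m) rows) a = wordOf n rows a) ∧
    (Ntot n m ∈ rows n → ∀ a ∈ Finset.Icc 1 (S m n),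
      wordOf n (shiftRows (Ntot n m) rows) a
        = wordOf n rows (if a = 1 then S m n else a - 1)) := by
  obtain ⟨hcard, hout, hdisj, hun⟩ := hpl
  by_cases hN : 1 ≤ Ntot n m
  swap
  · -- degenerate: no entries at all
    have hsubn : rows n ⊆ Finset.Icc 1 (Ntot n m) := by
      rw [← hun]
      exact Finset.subset_biUnion_of_mem rows (Finset.mem_Icc.2 ⟨hn, le_refl n⟩)
    have hrows : rows n = ∅ := by
      have hIcc : Finset.Icc 1 (Ntot n m) = ∅ := by
        rw [Finset.Icc_eq_empty_iff]; omega
      rw [hIcc] at hsubn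
      exact Finset.subset_empty.1 hsubn
    have hS0 : S m n = 0 := by
      rw [← hcard n (Finset.mem_Icc.2 ⟨hn, le_refl n⟩), hrows, Finset.card_empty]
    constructor <;> intro _ a ha <;> (rw [hS0] at ha; exact absurd ha (by simp))
  · have hsub : ∀ i, 1 ≤ i → i ≤ n → rows i ⊆ Finset.Icc 1 (Ntot n m) := by
      intro i h1 h2
      rw [← hun]
      exact Finset.subset_biUnion_of_mem rows (Finset.mem_Icc.2 ⟨h1, h2⟩)
    set Nt := Ntot n m with hNt
    set LS := (List.range n).map fun i => rows (i + 1) with hLS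
    have hlen : LS.length = n := by simp [hLS]
    have hLSne : LS ≠ [] := by
      intro hc; rw [hc] at hlen; simp at hlen; omega
    have hget : ∀ i, i < n → LS.getD i ∅ = rows (i + 1) := by
      intro i hi
      rw [hLS]
      rw [List.getD_eq_getElem?_getD, List.getElem?_map, List.getElem?_range hi]
      rfl
    have hSmono : ∀ i j, i ≤ j → S m i ≤ S m j := by
      intro i j hij
      exact Finset.sum_le_sum_of_subset (Finset.Icc_subset_Icc_right hij)
    have hGL : GoodL Nt LS := by
      constructor
      · intro A hA
        obtain ⟨i, hi, rfl⟩ := List.mem_map.1 hA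
        rw [List.mem_range] at hi
        exact hsub (i + 1) (by omega) (by omega)
      · intro i j hij hj
        rw [hlen] at hj
        have hi := lt_of_le_of_lt hij hj
        rw [hget i hi, hget j hj, hcard _ (Finset.mem_Icc.2 ⟨by omega, by omega⟩),
          hcard _ (Finset.mem_Icc.2 ⟨by omega, by omega⟩)]
        exact hSmono _ _ (by omega)
    have hbot : bot LS = rows n := by
      obtain ⟨k, rfl⟩ : ∃ k, n = k + 1 := ⟨n - 1, by omega⟩
      rw [hLS, List.range_succ, List.map_append]
      exact bot_append_singleton _ _
    have hKcard : (rows n).card = S m n := hcard n (Finset.mem_Icc.2 ⟨hn, le_refl n⟩)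
    have hLlen : ((rows n).sort (· ≤ ·)).length = S m n := by
      rw [Finset.length_sort, hKcard]
    have hentry_mem : ∀ a, 1 ≤ a → a ≤ S m n → entry rows n a ∈ rows n := by
      intro a h1 h2
      have hidx : a - 1 < ((rows n).sort (· ≤ ·)).length := by rw [hLlen]; omega
      rw [entry, List.getD_eq_getElem?_getD, List.getElem?_eq_getElem hidx]
      exact (Finset.mem_sort _).1 (List.getElem_mem hidx)
    have hpaths : pathsOf n rows = runRows n LS := rfl
    have hword : ∀ a, entry rows n a ∈ rows n → wordOf n rows a = labAux n LS (entry rows n a) := by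
      intro a hea
      have hw := word_lab Nt n n LS hLSne hlen.symm (le_of_eq hlen) hGL (entry rows n a)
        (by rwa [hbot])
      rw [wordOf, hpaths, hw, hlen]
      omega
    have hmap' : (List.range n).map (fun i => shiftRows Nt rows (i + 1)) = LS.map (Sh Nt) := by
      rw [hLS, List.map_map]
      rfl
    have hpaths' : pathsOf n (shiftRows Nt rows) = runRows n (LS.map (Sh Nt)) := by
      rw [pathsOf, hmap']
    have hGL' : GoodL Nt (LS.map (Sh Nt)) := GoodL_map_Sh Nt hN hGL
    have hlen' : (LS.map (Sh Nt)).length = n := by rw [List.length_map, hlen]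
    have hbot' : bot (LS.map (Sh Nt)) = Sh Nt (rows n) := by rw [bot_map_Sh, hbot]
    have hrowsSh : shiftRows Nt rows n = Sh Nt (rows n) := rfl
    have hword' : ∀ a, entry (shiftRows Nt rows) n a ∈ Sh Nt (rows n) →
        wordOf n (shiftRows Nt rows) a
          = labAux n (LS.map (Sh Nt)) (entry (shiftRows Nt rows) n a) := by
      intro a hea
      have hw := word_lab Nt n n (LS.map (Sh Nt)) (by simp [hLSne]) hlen'.symm
        (le_of_eq hlen') hGL' (entry (shiftRows Nt rows) n a) (by rwa [hbot'])
      rw [wordOf, hpaths', hw, hlen']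
      omega
    have hfinal : ∀ a, 1 ≤ a → a ≤ S m n →
        entry (shiftRows Nt rows) n a = sh Nt (entry rows n a) →
        wordOf n (shiftRows Nt rows) a = wordOf n rows a := by
      intro a h1 h2 hE
      have hmem := hentry_mem a h1 h2
      rw [hword' a (by rw [hE]; exact mem_Sh Nt hmem), hE,
        lab_equiv Nt hN n hGL _ (hsub n hn le_rfl hmem), hword a hmem]
    constructor
    · -- Nt not in the last row
      intro hNmem a ha
      rw [Finset.mem_Icc] at ha
      have hsort : (Sh Nt (rows n)).sort (· ≤ ·) = ((rows n).sort (· ≤ ·)).map (sh Nt) :=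
        sort_Sh_not_mem Nt (hsub n hn le_rfl) hNmem
      refine hfinal a ha.1 ha.2 ?_
      rw [entry, entry, hrowsSh, hsort, getD_map_sh Nt (by rw [hLlen]; omega)]
    · -- Nt in the last row
      intro hNmem a ha
      rw [Finset.mem_Icc] at ha
      have hK1 : 1 ≤ S m n := by
        rw [← hKcard]
        exact Finset.card_pos.2 ⟨Nt, hNmem⟩
      have hsplit : (rows n).sort (· ≤ ·) = ((rows n).erase Nt).sort (· ≤ ·) ++ [Nt] :=
        sort_erase_max Nt (hsub n hn le_rfl) hNmem
      have hL'len : (((rows n).erase Nt).sort (· ≤ ·)).length = S m n - 1 := by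
        rw [Finset.length_sort, Finset.card_erase_of_mem hNmem, hKcard]
      have hsort' : (Sh Nt (rows n)).sort (· ≤ ·)
          = 1 :: (((rows n).erase Nt).sort (· ≤ ·)).map (sh Nt) :=
        sort_Sh_mem Nt hN (hsub n hn le_rfl) hNmem
      have hentryK : entry rows n (S m n) = Nt := by
        rw [entry, hsplit, List.getD_eq_getElem?_getD, ← hL'len, List.getElem?_concat_length]
        rfl
      by_cases ha1 : a = 1
      · subst ha1
        rw [if_pos rfl]
        have hE1 : entry (shiftRows Nt rows) n 1 = sh Nt (entry rows n (S m n)) := by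
          rw [entry, hrowsSh, hsort', hentryK]
          simp [sh]
        rw [hword' 1 (by rw [hE1]; exact mem_Sh Nt (hentry_mem _ hK1 le_rfl)), hE1,
          lab_equiv Nt hN n hGL _ (hsub n hn le_rfl (hentry_mem _ hK1 le_rfl)),
          hword _ (hentry_mem _ hK1 le_rfl)]
      · rw [if_neg ha1]
        have ha2 : 2 ≤ a := by omega
        have hidx : a - 2 < (((rows n).erase Nt).sort (· ≤ ·)).length := by
          rw [hL'len]; omega
        have hEa : entry (shiftRows Nt rows) n a = sh Nt (entry rows n (a - 1)) := by
          rw [entry, entry, hrowsSh, hsort']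
          have h1 : a - 1 = (a - 2) + 1 := by omega
          have h2 : a - 1 - 1 = a - 2 := by omega
          rw [h2, h1, List.getD_cons_succ, getD_map_sh Nt hidx, hsplit,
            List.getD_eq_getElem?_getD, List.getD_eq_getElem?_getD,
            List.getElem?_append_left hidx]
        have hmem1 : entry rows n (a - 1) ∈ rows n := hentry_mem _ (by omega) (by omega)
        rw [hword' a (by rw [hEa]; exact mem_Sh Nt hmem1), hEa,
          lab_equiv Nt hN n hGL _ (hsub n hn le_rfl hmem1), hword _ hmem1]


end CMLQ
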